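/- For a ∈ (0,1] let F_a be the family of all conformal pseudometrics λ on 𝔻 with curvature κ_λ ≤ -4 and λ(0) ≤ a. Then for every z ∈ 𝔻 \ {0}: sup_{λ ∈ F_a} λ(z) = λ_𝔻(z) = 1/(1-|z|²). -/

import Mathlib

open Complex Filter MeasureTheory Metric Set Topology

noncomputable section

/-- The open unit disk in `ℂ`. -/
def unitDisk : Set ℂ := {z : ℂ | ‖z‖ < 1}

/-- The Laplacian of a real-valued function on `ℂ ≅ ℝ²`. -/
def lap (u : ℂ → ℝ) (z : ℂ) : ℝ :=
  fderiv ℝ (fun w => fderiv ℝ u w 1) z 1 +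
  fderiv ℝ (fun w => fderiv ℝ u w Complex.I) z Complex.I

/-- The Gauss curvature `κ_λ = -Δ(log λ)/λ²` of a conformal pseudometric `λ(z)|dz|`. -/
def curv (lam : ℂ → ℝ) (z : ℂ) : ℝ :=
  -(lap (fun w => Real.log (lam w)) z) / (lam z) ^ 2

/-- A conformal pseudometric on the unit disk: continuous, nonnegative, and C² where positive. -/
structure IsConfPseudometric (lam : ℂ → ℝ) : Prop where
  cont : ContinuousOn lam unitDisk
  nonneg : ∀ z ∈ unitDisk, 0 ≤ lam z
  smooth : ContDiffOn ℝ 2 lam {z : ℂ | z ∈ unitDisk ∧ 0 < lam z}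

/-! Upper bound (Ahlfors' lemma): for `‖z‖ < r < 1`, `λ(w)(r² - |w|²)` attains its maximum on the
closed disk of radius `r`. At a positive maximum `w₀` the function `log λ + log (r² - |w|²)` has a
local maximum, so its Laplacian is `≤ 0`; since `Δ log λ ≥ 4λ²` (curvature `≤ -4`) and
`Δ log (r² - |w|²) = -4r²/(r² - |w|²)²`, this gives `λ(w₀)(r² - |w₀|²) ≤ r`. Letting `r → 1`
yields `λ ≤ λ_𝔻`.

Sharpness: for `s > 0` the pseudometric `|w|^s λ_𝔻(w)` vanishes at `0`, has curvature
`-4|w|^(-2s) ≤ -4`, and tends to `λ_𝔻(z)` at `z ≠ 0` as `s → 0`. -/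

open Laplacian
open scoped RealInnerProductSpace

theorem IsLocalMax.le_zero_of_hasDerivAt_deriv {g g' : ℝ → ℝ} {x L : ℝ}
    (hmax : IsLocalMax g x) (hg : ∀ᶠ t in 𝓝 x, HasDerivAt g (g' t) t)
    (hg' : HasDerivAt g' L x) : L ≤ 0 := by
  by_contra! hL
  -- otherwise `g' > 0` just to the right of `x`, so `g` increases strictly there
  have hg'x : g' x = 0 := hmax.hasDerivAt_eq_zero hg.self_of_nhds
  have hpos : ∀ᶠ t in 𝓝[>] x, 0 < g' t := by
    filter_upwards [nhdsGT_le_nhdsNE x ((hasDerivAt_iff_tendsto_slope.mp hg').eventually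
      (eventually_gt_nhds hL)), self_mem_nhdsWithin] with t ht hxt
    exact pos_of_slope_pos hxt ht hg'x
  obtain ⟨b, hxb, hb⟩ := (nhdsGE_basis x).eventually_iff.mp
    (nhdsWithin_le_nhds (hg.and hmax))
  obtain ⟨c, hxc, hc⟩ := (nhdsGT_basis x).eventually_iff.mp hpos
  set d := b ⊓ c
  have hxd : x < d := lt_inf_iff.mpr ⟨hxb, hxc⟩
  have hmono : StrictMonoOn g (Ico x d) := by
    refine strictMonoOn_of_deriv_pos (convex_Ico x d) (fun t ht => ?_) (fun t ht => ?_)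
    · exact (hb ⟨ht.1, ht.2.trans_le inf_le_left⟩).1.continuousAt.continuousWithinAt
    · rw [interior_Ico] at ht
      rw [(hb ⟨ht.1.le, ht.2.trans_le inf_le_left⟩).1.deriv]
      exact hc ⟨ht.1, ht.2.trans_le inf_le_right⟩
  have hm : (x + d) / 2 ∈ Ico x d := ⟨by linarith, by linarith⟩
  exact (hmono ⟨le_rfl, hxd⟩ hm (by linarith)).not_ge (hb ⟨hm.1, hm.2.trans_le inf_le_left⟩).2

theorem IsLocalMax.fderiv_fderiv_apply_self_nonpos {E : Type*} [NormedAddCommGroup E]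
    [NormedSpace ℝ E] {u : E → ℝ} {z : E} (hmax : IsLocalMax u z) (hu : ContDiffAt ℝ 2 u z)
    (v : E) : fderiv ℝ (fun w => fderiv ℝ u w v) z v ≤ 0 := by
  have hline (t : ℝ) : HasDerivAt (fun t : ℝ => z + t • v) v t := by
    simpa using ((hasDerivAt_id t).smul_const v).const_add z
  have hline0 : Tendsto (fun t : ℝ => z + t • v) (𝓝 0) (𝓝 z) := by
    simpa using (hline 0).continuousAt.tendsto
  refine IsLocalMax.le_zero_of_hasDerivAt_deriv (g := fun t => u (z + t • v))
    (g' := fun t => fderiv ℝ u (z + t • v) v) (x := 0) ?_ ?_ ?_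
  · have hmax' : IsLocalMax u (z + (0 : ℝ) • v) := by rwa [zero_smul, add_zero]
    exact hmax'.comp_continuous (g := fun t : ℝ => z + t • v) (hline 0).continuousAt
  · filter_upwards [hline0.eventually (hu.eventually (by simp))] with t ht
    exact (ht.differentiableAt two_ne_zero).hasFDerivAt.comp_hasDerivAt t (hline t)
  · have hd : DifferentiableAt ℝ (fun w => fderiv ℝ u w v) z :=
      ((hu.fderiv_right (m := 1) le_rfl).differentiableAt one_ne_zero).clm_apply
        (differentiableAt_const v)
    have hd' : HasFDerivAt (fun w => fderiv ℝ u w v) (fderiv ℝ (fun w => fderiv ℝ u w v) z)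
        (z + (0 : ℝ) • v) := by rw [zero_smul, add_zero]; exact hd.hasFDerivAt
    exact hd'.comp_hasDerivAt 0 (hline 0)

theorem fderiv_fderiv_apply_comp_norm_sq {E : Type*} [NormedAddCommGroup E]
    [InnerProductSpace ℝ E] {φ φ' : ℝ → ℝ} {φ'' : ℝ} {z : E}
    (hφ : ∀ᶠ t in 𝓝 (‖z‖ ^ 2), HasDerivAt φ (φ' t) t) (hφ' : HasDerivAt φ' φ'' (‖z‖ ^ 2))
    (v : E) :
    fderiv ℝ (fun w => fderiv ℝ (fun x => φ (‖x‖ ^ 2)) w v) z v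
      = 2 * φ' (‖z‖ ^ 2) * ‖v‖ ^ 2 + 4 * φ'' * ⟪z, v⟫ ^ 2 := by
  have hfd : (fun w => fderiv ℝ (fun x => φ (‖x‖ ^ 2)) w v)
      =ᶠ[𝓝 z] fun w => φ' (‖w‖ ^ 2) * (2 * ⟪w, v⟫) := by
    filter_upwards [((contDiff_norm_sq ℝ (n := 0)).continuous.tendsto z).eventually hφ]
      with w hw
    have : HasFDerivAt (fun x => φ (‖x‖ ^ 2)) _ w :=
      hw.comp_hasFDerivAt w (hasStrictFDerivAt_norm_sq w).hasFDerivAt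
    simp [this.fderiv]
  have hder : HasFDerivAt (fun w => φ' (‖w‖ ^ 2) * (2 * ⟪w, v⟫)) _ z :=
    (hφ'.comp_hasFDerivAt z (hasStrictFDerivAt_norm_sq z).hasFDerivAt).mul
      (((hasFDerivAt_id z).inner ℝ (hasFDerivAt_const v z)).const_mul 2)
  rw [hfd.fderiv_eq, hder.fderiv]
  simp
  ring

theorem lap_eq_laplacian {u : ℂ → ℝ} {z : ℂ} (hu : ContDiffAt ℝ 2 u z) : lap u z = Δ u z := by
  have hd : DifferentiableAt ℝ (fderiv ℝ u) z :=
    (hu.fderiv_right (m := 1) le_rfl).differentiableAt one_ne_zero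
  simp [lap, InnerProductSpace.laplacian_eq_iteratedFDeriv_complexPlane, iteratedFDeriv_two_apply,
    fderiv_clm_apply hd (differentiableAt_const _)]

theorem lap_add {u v : ℂ → ℝ} {z : ℂ} (hu : ContDiffAt ℝ 2 u z) (hv : ContDiffAt ℝ 2 v z) :
    lap (fun w => u w + v w) z = lap u z + lap v z := by
  rw [lap_eq_laplacian hu, lap_eq_laplacian hv, lap_eq_laplacian (hu.add hv)]
  exact hu.laplacian_add hv

theorem lap_congr_nhds {u v : ℂ → ℝ} {z : ℂ} (h : u =ᶠ[𝓝 z] v) : lap u z = lap v z := by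
  have key (e : ℂ) : fderiv ℝ (fun w => fderiv ℝ u w e) z = fderiv ℝ (fun w => fderiv ℝ v w e) z :=
    Filter.EventuallyEq.fderiv_eq ((h.fderiv (𝕜 := ℝ)).mono fun w hw => by simp only [hw])
  simp only [lap, key]

theorem lap_comp_norm_sq {φ φ' : ℝ → ℝ} {φ'' : ℝ} {z : ℂ}
    (hφ : ∀ᶠ t in 𝓝 (‖z‖ ^ 2), HasDerivAt φ (φ' t) t) (hφ' : HasDerivAt φ' φ'' (‖z‖ ^ 2)) :
    lap (fun w => φ (‖w‖ ^ 2)) z = 4 * ‖z‖ ^ 2 * φ'' + 4 * φ' (‖z‖ ^ 2) := by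
  rw [lap, fderiv_fderiv_apply_comp_norm_sq hφ hφ', fderiv_fderiv_apply_comp_norm_sq hφ hφ',
    Complex.sq_norm, Complex.normSq_apply]
  simp [Complex.inner]
  ring

theorem IsLocalMax.lap_nonpos {u : ℂ → ℝ} {z : ℂ} (hmax : IsLocalMax u z)
    (hu : ContDiffAt ℝ 2 u z) : lap u z ≤ 0 :=
  add_nonpos (hmax.fderiv_fderiv_apply_self_nonpos hu 1)
    (hmax.fderiv_fderiv_apply_self_nonpos hu Complex.I)

theorem lap_log_sub_norm_sq {r : ℝ} {z : ℂ} (hz : ‖z‖ < r) :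
    lap (fun w => Real.log (r ^ 2 - ‖w‖ ^ 2)) z = -(4 * r ^ 2 / (r ^ 2 - ‖z‖ ^ 2) ^ 2) := by
  have hd : 0 < r ^ 2 - ‖z‖ ^ 2 := by nlinarith [norm_nonneg z]
  have hφ : ∀ᶠ t in 𝓝 (‖z‖ ^ 2), HasDerivAt (fun t => Real.log (r ^ 2 - t)) (-(r ^ 2 - t)⁻¹) t := by
    filter_upwards [eventually_lt_nhds (sub_pos.mp hd)] with t ht
    exact (((hasDerivAt_id' t).const_sub (r ^ 2)).log (sub_pos.mpr ht).ne').congr_deriv (by ring)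
  have hφ' : HasDerivAt (fun t => -(r ^ 2 - t)⁻¹) (-((r ^ 2 - ‖z‖ ^ 2) ^ 2)⁻¹) (‖z‖ ^ 2) :=
    (((hasDerivAt_id' _).const_sub (r ^ 2)).fun_inv hd.ne').fun_neg.congr_deriv (by ring)
  rw [lap_comp_norm_sq hφ hφ']
  field_simp
  ring

theorem isOpen_unitDisk : IsOpen unitDisk :=
  isOpen_lt continuous_norm continuous_const

theorem one_sub_sq_norm_pos {w : ℂ} (hw : w ∈ unitDisk) : 0 < 1 - ‖w‖ ^ 2 := by
  have : ‖w‖ < 1 := hw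
  nlinarith [norm_nonneg w]

namespace IsConfPseudometric

variable {lam : ℂ → ℝ}

theorem isOpen_setOf_pos (h : IsConfPseudometric lam) :
    IsOpen {w : ℂ | w ∈ unitDisk ∧ 0 < lam w} :=
  h.cont.isOpen_inter_preimage isOpen_unitDisk isOpen_Ioi

theorem contDiffAt_log (h : IsConfPseudometric lam) {w : ℂ} (hw : w ∈ unitDisk)
    (hpos : 0 < lam w) : ContDiffAt ℝ 2 (fun w => Real.log (lam w)) w :=
  (h.smooth.contDiffAt (h.isOpen_setOf_pos.mem_nhds ⟨hw, hpos⟩)).log hpos.ne'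

theorem continuousAt (h : IsConfPseudometric lam) {w : ℂ} (hw : w ∈ unitDisk) :
    ContinuousAt lam w :=
  h.cont.continuousAt (isOpen_unitDisk.mem_nhds hw)

end IsConfPseudometric

theorem curv_le_neg_four_iff {lam : ℂ → ℝ} {w : ℂ} (hpos : 0 < lam w) :
    curv lam w ≤ -4 ↔ 4 * lam w ^ 2 ≤ lap (fun w => Real.log (lam w)) w := by
  rw [curv, div_le_iff₀ (by positivity)]
  constructor <;> intro h <;> linarith

theorem IsConfPseudometric.mul_le_of_isLocalMax {lam : ℂ → ℝ} (h : IsConfPseudometric lam)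
    (hcurv : ∀ w ∈ unitDisk, 0 < lam w → curv lam w ≤ -4) {r : ℝ} (hr : r ≤ 1) {w₀ : ℂ}
    (hw₀ : ‖w₀‖ < r) (hpos : 0 < lam w₀)
    (hmax : IsLocalMax (fun w => lam w * (r ^ 2 - ‖w‖ ^ 2)) w₀) :
    lam w₀ * (r ^ 2 - ‖w₀‖ ^ 2) ≤ r := by
  have hw₀D : w₀ ∈ unitDisk := hw₀.trans_le hr
  have hr0 : 0 < r := (norm_nonneg w₀).trans_lt hw₀
  have hd : 0 < r ^ 2 - ‖w₀‖ ^ 2 := by nlinarith [norm_nonneg w₀]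
  have hdist : ContDiff ℝ 2 (fun w : ℂ => r ^ 2 - ‖w‖ ^ 2) :=
    contDiff_const.sub (contDiff_norm_sq ℝ)
  have hlog := h.contDiffAt_log hw₀D hpos
  have hψ : ContDiffAt ℝ 2 (fun w : ℂ => Real.log (r ^ 2 - ‖w‖ ^ 2)) w₀ :=
    hdist.contDiffAt.log hd.ne'
  have hmax_log : IsLocalMax (fun w => Real.log (lam w) + Real.log (r ^ 2 - ‖w‖ ^ 2)) w₀ := by
    filter_upwards [hmax, (h.continuousAt hw₀D).eventually (eventually_gt_nhds hpos),
      hdist.continuous.continuousAt.eventually (eventually_gt_nhds hd)] with w hw hlam hdw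
    rw [← Real.log_mul hlam.ne' hdw.ne', ← Real.log_mul hpos.ne' hd.ne']
    exact Real.log_le_log (mul_pos hlam hdw) hw
  have hlap := hmax_log.lap_nonpos (hlog.add hψ)
  rw [lap_add hlog hψ, lap_log_sub_norm_sq hw₀, mul_div_assoc] at hlap
  have hcomp := (curv_le_neg_four_iff hpos).mp (hcurv w₀ hw₀D hpos)
  have hsq : (lam w₀ * (r ^ 2 - ‖w₀‖ ^ 2)) ^ 2 ≤ r ^ 2 := by
    rw [mul_pow, ← le_div_iff₀ (by positivity)]
    linarith
  exact (pow_le_pow_iff_left₀ (by positivity) hr0.le two_ne_zero).mp hsq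

theorem IsConfPseudometric.mul_le_of_lt {lam : ℂ → ℝ} (h : IsConfPseudometric lam)
    (hcurv : ∀ w ∈ unitDisk, 0 < lam w → curv lam w ≤ -4) {r : ℝ} (hr : r < 1) {z : ℂ}
    (hz : ‖z‖ < r) : lam z * (r ^ 2 - ‖z‖ ^ 2) ≤ r := by
  have hr0 : 0 < r := (norm_nonneg z).trans_lt hz
  have hK : closedBall (0 : ℂ) r ⊆ unitDisk := fun w hw =>
    (mem_closedBall_zero_iff.mp hw).trans_lt hr
  set f : ℂ → ℝ := fun w => lam w * (r ^ 2 - ‖w‖ ^ 2)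
  have hf : ContinuousOn f (closedBall 0 r) :=
    (h.cont.mono hK).mul (continuous_const.sub (continuous_norm.pow 2)).continuousOn
  obtain ⟨w₀, hw₀K, hw₀max⟩ :=
    (isCompact_closedBall (0 : ℂ) r).exists_isMaxOn ⟨0, mem_closedBall_self hr0.le⟩ hf
  refine (hw₀max (mem_closedBall_zero_iff.mpr hz.le)).trans ?_
  rcases le_or_gt (f w₀) 0 with hnonpos | hprod
  · linarith
  -- a positive maximum lies in the open disk of radius `r`
  have hd : 0 < r ^ 2 - ‖w₀‖ ^ 2 := pos_of_mul_pos_right hprod (h.nonneg w₀ (hK hw₀K))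
  have hw₀ : ‖w₀‖ < r := (pow_lt_pow_iff_left₀ (norm_nonneg w₀) hr0.le two_ne_zero).mp (by linarith)
  refine h.mul_le_of_isLocalMax hcurv hr.le hw₀ (pos_of_mul_pos_left hprod hd.le)
    (hw₀max.isLocalMax (mem_of_superset ?_ ball_subset_closedBall))
  exact isOpen_ball.mem_nhds (mem_ball_zero_iff.mpr hw₀)

theorem IsConfPseudometric.le_poincare {lam : ℂ → ℝ} (h : IsConfPseudometric lam)
    (hcurv : ∀ w ∈ unitDisk, 0 < lam w → curv lam w ≤ -4) {z : ℂ} (hz : z ∈ unitDisk) :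
    lam z ≤ 1 / (1 - ‖z‖ ^ 2) := by
  have hz' : ‖z‖ < 1 := hz
  have hlim : Tendsto (fun r : ℝ => lam z * (r ^ 2 - ‖z‖ ^ 2) - r) (𝓝[<] 1)
      (𝓝 (lam z * (1 - ‖z‖ ^ 2) - 1)) := by
    have : Continuous (fun r : ℝ => lam z * (r ^ 2 - ‖z‖ ^ 2) - r) := by fun_prop
    simpa using this.continuousWithinAt.tendsto (x := 1) (s := Iio 1)
  have hle := le_of_tendsto hlim (by
    filter_upwards [Ioo_mem_nhdsLT hz'] with r hr
    exact sub_nonpos.mpr (h.mul_le_of_lt hcurv hr.2 hr.1))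
  rw [le_div_iff₀ (one_sub_sq_norm_pos hz)]
  linarith

def poincarePow (s : ℝ) (w : ℂ) : ℝ := ‖w‖ ^ s / (1 - ‖w‖ ^ 2)

theorem poincarePow_zero {s : ℝ} (hs : s ≠ 0) : poincarePow s 0 = 0 := by
  simp [poincarePow, Real.zero_rpow hs]

theorem isConfPseudometric_poincarePow {s : ℝ} (hs : 0 < s) :
    IsConfPseudometric (poincarePow s) := by
  refine ⟨?_, fun w hw => div_nonneg (by positivity) (one_sub_sq_norm_pos hw).le, ?_⟩
  · exact ((continuous_norm.rpow_const fun _ => Or.inr hs.le).continuousOn.div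
      (continuous_const.sub (continuous_norm.pow 2)).continuousOn
      fun w hw => (one_sub_sq_norm_pos hw).ne')
  · rintro w ⟨hw, hpos⟩
    have hw0 : w ≠ 0 := by rintro rfl; simp [poincarePow_zero hs.ne'] at hpos
    have hnorm : ContDiffAt ℝ 2 (‖·‖) w := contDiffAt_norm ℝ hw0
    exact ((Real.contDiffAt_rpow_const_of_ne (norm_ne_zero_iff.mpr hw0)).comp w hnorm).div
      (contDiffAt_const.sub (hnorm.pow 2)) (one_sub_sq_norm_pos hw).ne' |>.contDiffWithinAt

theorem lap_log_poincarePow (s : ℝ) {w : ℂ} (hw0 : w ≠ 0) (hw : ‖w‖ < 1) :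
    lap (fun w => Real.log (poincarePow s w)) w = 4 / (1 - ‖w‖ ^ 2) ^ 2 := by
  have hn0 : 0 < ‖w‖ ^ 2 := by positivity
  have hn1 : ‖w‖ ^ 2 < 1 := by nlinarith [norm_nonneg w]
  set φ : ℝ → ℝ := fun t => s / 2 * Real.log t - Real.log (1 - t)
  have hlog : (fun w => Real.log (poincarePow s w)) =ᶠ[𝓝 w] fun w => φ (‖w‖ ^ 2) := by
    filter_upwards [isOpen_compl_singleton.mem_nhds hw0,
      (continuous_norm.continuousAt (x := w)).eventually (eventually_lt_nhds hw)] with v hv0 hv1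
    have hv : 0 < ‖v‖ := norm_pos_iff.mpr hv0
    simp only [φ, poincarePow]
    rw [Real.log_div (by positivity) (by nlinarith), Real.log_rpow hv, Real.log_pow]
    push_cast
    ring
  have hφ : ∀ᶠ t in 𝓝 (‖w‖ ^ 2), HasDerivAt φ (s / 2 * t⁻¹ + (1 - t)⁻¹) t := by
    filter_upwards [Ioo_mem_nhds hn0 hn1] with t ht
    refine (((Real.hasDerivAt_log ht.1.ne').const_mul (s / 2)).sub
      (((hasDerivAt_id' t).const_sub 1).log (sub_pos.mpr ht.2).ne')).congr_deriv ?_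
    ring
  have hφ' : HasDerivAt (fun t => s / 2 * t⁻¹ + (1 - t)⁻¹)
      (-(s / 2) / (‖w‖ ^ 2) ^ 2 + 1 / (1 - ‖w‖ ^ 2) ^ 2) (‖w‖ ^ 2) := by
    refine (((hasDerivAt_inv hn0.ne').const_mul (s / 2)).add
      (((hasDerivAt_id' _).const_sub 1).fun_inv (sub_pos.mpr hn1).ne')).congr_deriv ?_
    ring
  have hd : 1 - ‖w‖ ^ 2 ≠ 0 := (sub_pos.mpr hn1).ne'
  rw [lap_congr_nhds hlog, lap_comp_norm_sq hφ hφ']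
  field_simp
  ring

theorem curv_poincarePow_le {s : ℝ} (hs : 0 < s) :
    ∀ w ∈ unitDisk, 0 < poincarePow s w → curv (poincarePow s) w ≤ -4 := by
  intro w hw hpos
  have hw0 : w ≠ 0 := by rintro rfl; simp [poincarePow_zero hs.ne'] at hpos
  have hw1 : ‖w‖ < 1 := hw
  have hpow : (‖w‖ ^ s) ^ 2 ≤ 1 :=
    pow_le_one₀ (by positivity) (Real.rpow_le_one (norm_nonneg w) hw1.le hs.le)
  rw [curv_le_neg_four_iff hpos, lap_log_poincarePow s hw0 hw1, poincarePow, div_pow,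
    ← mul_div_assoc]
  gcongr
  linarith

theorem tendsto_poincarePow {z : ℂ} (hz : z ≠ 0) :
    Tendsto (fun s => poincarePow s z) (𝓝 0) (𝓝 (1 / (1 - ‖z‖ ^ 2))) := by
  simpa [poincarePow] using
    (Real.continuousAt_const_rpow (norm_ne_zero_iff.mpr hz) (b := 0)).tendsto.div_const
      (1 - ‖z‖ ^ 2)

theorem sup_pseudometric_family_general
    (a : ℝ) (ha : 0 < a)
    (z : ℂ) (hz : z ∈ unitDisk) (hz0 : z ≠ 0) :
    sSup {x : ℝ | ∃ lam : ℂ → ℝ, IsConfPseudometric lam ∧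
        (∀ w ∈ unitDisk, 0 < lam w → curv lam w ≤ -4) ∧ lam 0 ≤ a ∧ x = lam z}
      = 1 / (1 - ‖z‖ ^ 2) := by
  have hmem {s : ℝ} (hs : 0 < s) : ∃ lam : ℂ → ℝ, IsConfPseudometric lam ∧
      (∀ w ∈ unitDisk, 0 < lam w → curv lam w ≤ -4) ∧ lam 0 ≤ a ∧ poincarePow s z = lam z :=
    ⟨poincarePow s, isConfPseudometric_poincarePow hs, curv_poincarePow_le hs,
      (poincarePow_zero hs.ne').trans_le ha.le, rfl⟩
  refine csSup_eq_of_forall_le_of_forall_lt_exists_gt ⟨_, hmem one_pos⟩ ?_ fun x hx => ?_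
  · rintro x ⟨lam, h, hcurv, -, rfl⟩
    exact h.le_poincare hcurv hz
  · obtain ⟨s, hxs, hs⟩ := ((tendsto_poincarePow hz0).mono_left nhdsWithin_le_nhds
      |>.eventually (eventually_gt_nhds hx) |>.and (self_mem_nhdsWithin (s := Ioi 0))).exists
    exact ⟨_, hmem hs, hxs⟩

/-- **No Ahlfors extension of the Golusin inequality.**
For `a ∈ (0,1]`, let `F_a` be the family of conformal pseudometrics `λ` on `𝔻` with
curvature `κ_λ ≤ -4` and `λ(0) ≤ a`.  Then `sup_{λ ∈ F_a} λ(z) = λ_𝔻(z) = 1/(1-|z|²)`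
for every `z ∈ 𝔻 \ {0}`. -/
theorem sup_pseudometric_family
    (a : ℝ) (ha : 0 < a) (ha1 : a ≤ 1)
    (z : ℂ) (hz : z ∈ unitDisk) (hz0 : z ≠ 0) :
    sSup {x : ℝ | ∃ lam : ℂ → ℝ, IsConfPseudometric lam ∧
        (∀ w ∈ unitDisk, 0 < lam w → curv lam w ≤ -4) ∧ lam 0 ≤ a ∧ x = lam z}
      = 1 / (1 - ‖z‖ ^ 2) :=
  sup_pseudometric_family_general a ha z hz hz0
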